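/- arXiv:2509.01849 — 3 statements merged into one kernel-verified Lean document; each statement's English description precedes it below -/
import Mathlib

section
/- Let K be a group, A ⊆ K, and suppose that the closure L of {1} ∪ A under ∘ is a reflection system for K. Then for every x ∈ L: the closure of {1, x} ∪ xA under ∘ equals xL, the closure of {1, x} ∪ Ax under ∘ equals Lx, and both xL and Lx are reflection systems for K. -/
noncomputable section

/-- The binary operation `a ∘ b = a * b⁻¹ * a`. -/
def circ {K : Type*} [Group K] (a b : K) : K := a * b⁻¹ * a

/-- A set is closed under `circ`. -/
def CircClosed {K : Type*} [Group K] (S : Set K) : Prop :=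
  ∀ a ∈ S, ∀ b ∈ S, circ a b ∈ S

/-- The closure of a set under `circ`: the smallest superset closed under `circ`. -/
def circClosure {K : Type*} [Group K] (X : Set K) : Set K :=
  ⋂₀ {S : Set K | X ⊆ S ∧ CircClosed S}

/-- `L` is a reflection system for the subgroup `K`. -/
def IsReflectionSystem {G : Type*} [Group G] (K : Subgroup G) (L : Set G) : Prop :=
  Subgroup.closure L = K ∧ CircClosed L ∧ (1 : G) ∈ L

/-- The set `L·H`. -/
def mulSet {G : Type*} [Group G] (L : Set G) (H : Subgroup G) : Set G :=
  {x | ∃ l ∈ L, ∃ h ∈ H, x = l * h}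

lemma subset_circClosure {K : Type*} [Group K] (X : Set K) : X ⊆ circClosure X := by
  intro a ha S hS; exact hS.1 ha

lemma circClosed_circClosure {K : Type*} [Group K] (X : Set K) :
    CircClosed (circClosure X) := by
  intro a ha b hb S hS
  exact hS.2 a (ha S hS) b (hb S hS)

lemma circClosure_subset {K : Type*} [Group K] {X S : Set K} (h1 : X ⊆ S)
    (h2 : CircClosed S) : circClosure X ⊆ S :=
  fun _ ha => ha S ⟨h1, h2⟩

lemma circ_mul_left {K : Type*} [Group K] (x a b : K) :
    circ (x * a) (x * b) = x * circ a b := by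
  simp [circ, mul_assoc]

lemma circ_mul_right {K : Type*} [Group K] (x a b : K) :
    circ (a * x) (b * x) = circ a b * x := by
  simp [circ, mul_assoc]

theorem statement_0 {K : Type*} [Group K] (A : Set K)
    (hL : IsReflectionSystem (⊤ : Subgroup K) (circClosure ({1} ∪ A)))
    (x : K) (hx : x ∈ circClosure ({1} ∪ A)) :
    circClosure ({1, x} ∪ (x * ·) '' A) = (x * ·) '' circClosure ({1} ∪ A) ∧
    circClosure ({1, x} ∪ (· * x) '' A) = (· * x) '' circClosure ({1} ∪ A) ∧
    IsReflectionSystem (⊤ : Subgroup K) ((x * ·) '' circClosure ({1} ∪ A)) ∧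
    IsReflectionSystem (⊤ : Subgroup K) ((· * x) '' circClosure ({1} ∪ A)) := by
  set L := circClosure ({1} ∪ A) with hLdef
  obtain ⟨hgen, hclosed, hone⟩ := hL
  have hA : A ⊆ L := (Set.union_subset_iff.mp (subset_circClosure _)).2
  have hxinv : x⁻¹ ∈ L := by
    have := hclosed 1 hone x hx
    simpa [circ] using this
  -- xL is circ-closed
  have hclosedL : CircClosed ((x * ·) '' L) := by
    rintro _ ⟨a, ha, rfl⟩ _ ⟨b, hb, rfl⟩
    exact ⟨circ a b, hclosed a ha b hb, (circ_mul_left x a b).symm⟩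
  have hclosedR : CircClosed ((· * x) '' L) := by
    rintro _ ⟨a, ha, rfl⟩ _ ⟨b, hb, rfl⟩
    exact ⟨circ a b, hclosed a ha b hb, (circ_mul_right x a b).symm⟩
  -- first equality
  have h1 : circClosure ({1, x} ∪ (x * ·) '' A) = (x * ·) '' L := by
    apply le_antisymm
    · apply circClosure_subset _ hclosedL
      rintro y (⟨rfl | rfl⟩ | ⟨a, ha, rfl⟩)
      · exact ⟨x⁻¹, hxinv, by simp⟩
      · exact ⟨1, hone, by simp⟩
      · exact ⟨a, hA ha, rfl⟩
    · rintro _ ⟨l, hl, rfl⟩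
      set M := circClosure ({1, x} ∪ (x * ·) '' A) with hM
      have hMsub : L ⊆ (x⁻¹ * ·) '' M := by
        apply circClosure_subset
        · rintro y (rfl | hy)
          · exact ⟨x, subset_circClosure _ (Or.inl (Or.inr rfl)), by simp⟩
          · exact ⟨x * y, subset_circClosure _ (Or.inr ⟨y, hy, rfl⟩), by group⟩
        · rintro _ ⟨a, ha, rfl⟩ _ ⟨b, hb, rfl⟩
          exact ⟨circ a b, circClosed_circClosure _ a ha b hb,
            (circ_mul_left x⁻¹ a b).symm⟩
      obtain ⟨m, hm, hml⟩ := hMsub hl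
      have : x * l = m := by rw [← hml]; group
      show x * l ∈ M
      rw [this]; exact hm
  have h2 : circClosure ({1, x} ∪ (· * x) '' A) = (· * x) '' L := by
    apply le_antisymm
    · apply circClosure_subset _ hclosedR
      rintro y (⟨rfl | rfl⟩ | ⟨a, ha, rfl⟩)
      · exact ⟨x⁻¹, hxinv, by simp⟩
      · exact ⟨1, hone, by simp⟩
      · exact ⟨a, hA ha, rfl⟩
    · rintro _ ⟨l, hl, rfl⟩
      set M := circClosure ({1, x} ∪ (· * x) '' A) with hM
      have hMsub : L ⊆ (· * x⁻¹) '' M := by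
        apply circClosure_subset
        · rintro y (rfl | hy)
          · exact ⟨x, subset_circClosure _ (Or.inl (Or.inr rfl)), by simp⟩
          · exact ⟨y * x, subset_circClosure _ (Or.inr ⟨y, hy, rfl⟩), by group⟩
        · rintro _ ⟨a, ha, rfl⟩ _ ⟨b, hb, rfl⟩
          exact ⟨circ a b, circClosed_circClosure _ a ha b hb,
            (circ_mul_right x⁻¹ a b).symm⟩
      obtain ⟨m, hm, hml⟩ := hMsub hl
      have : l * x = m := by rw [← hml]; group
      show l * x ∈ M
      rw [this]; exact hm
  refine ⟨h1, h2, ⟨?_, hclosedL, ⟨x⁻¹, hxinv, by simp⟩⟩,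
    ⟨?_, hclosedR, ⟨x⁻¹, hxinv, by simp⟩⟩⟩
  · rw [eq_top_iff, ← hgen, Subgroup.closure_le]
    intro l hl
    have hxmem : x ∈ Subgroup.closure ((x * ·) '' L) :=
      Subgroup.subset_closure ⟨1, hone, by simp⟩
    have hxl : x * l ∈ Subgroup.closure ((x * ·) '' L) :=
      Subgroup.subset_closure ⟨l, hl, rfl⟩
    have : x⁻¹ * (x * l) ∈ Subgroup.closure ((x * ·) '' L) :=
      mul_mem (inv_mem hxmem) hxl
    simpa using this
  · rw [eq_top_iff, ← hgen, Subgroup.closure_le]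
    intro l hl
    have hxmem : x ∈ Subgroup.closure ((· * x) '' L) :=
      Subgroup.subset_closure ⟨1, hone, by simp⟩
    have hxl : l * x ∈ Subgroup.closure ((· * x) '' L) :=
      Subgroup.subset_closure ⟨l, hl, rfl⟩
    have : l * x * x⁻¹ ∈ Subgroup.closure ((· * x) '' L) :=
      mul_mem hxl (inv_mem hxmem)
    simpa using this
end
end

section
/- For any finite subgroup K of ℍˣ, the set {h ∈ K : D₁(h) lies in the subgroup of GL₂(ℍ) generated by {M_b : b ∈ K}} equals the commutator subgroup [K, K] of K. -/
noncomputable section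

open Matrix

local notation "ℍ" => Quaternion ℝ

/-- `H` is a normal subgroup of `K` (both given as subgroups of an ambient group). -/
def NormalIn {G : Type*} [Group G] (H K : Subgroup G) : Prop :=
  H ≤ K ∧ ∀ k ∈ K, ∀ h ∈ H, k * h * k⁻¹ ∈ H

/-- The orbit of `b` in `L`: smallest subset of `L` containing `b` and closed under
`x ↦ a ∘ x` for all `a ∈ L`. -/
def orb {K : Type*} [Group K] (L : Set K) (b : K) : Set K :=
  ⋂₀ {S : Set K | b ∈ S ∧ S ⊆ L ∧ ∀ a ∈ L, ∀ x ∈ S, circ a x ∈ S}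

lemma mk_ne_zero_re {a b c d : ℝ} (h : a ≠ 0) : (⟨a,b,c,d⟩ : ℍ) ≠ 0 :=
  fun h0 => h (congrArg QuaternionAlgebra.re h0)

lemma mk_ne_zero_imI {a b c d : ℝ} (h : b ≠ 0) : (⟨a,b,c,d⟩ : ℍ) ≠ 0 :=
  fun h0 => h (congrArg QuaternionAlgebra.imI h0)

lemma mk_ne_zero_imJ {a b c d : ℝ} (h : c ≠ 0) : (⟨a,b,c,d⟩ : ℍ) ≠ 0 :=
  fun h0 => h (congrArg QuaternionAlgebra.imJ h0)

lemma mk_ne_zero_imK {a b c d : ℝ} (h : d ≠ 0) : (⟨a,b,c,d⟩ : ℍ) ≠ 0 :=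
  fun h0 => h (congrArg QuaternionAlgebra.imK h0)

/-- The quaternion `i` as a unit. -/
def iU : ℍˣ := Units.mk0 (⟨0,1,0,0⟩ : ℍ) (mk_ne_zero_imI one_ne_zero)

/-- The quaternion `j` as a unit. -/
def jU : ℍˣ := Units.mk0 (⟨0,0,1,0⟩ : ℍ) (mk_ne_zero_imJ one_ne_zero)

/-- The quaternion `k` as a unit. -/
def kU : ℍˣ := Units.mk0 (⟨0,0,0,1⟩ : ℍ) (mk_ne_zero_imK one_ne_zero)

/-- The quaternion `ζ = (1+i+j+k)/2` as a unit. -/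
def zetaU : ℍˣ := Units.mk0 (⟨1/2,1/2,1/2,1/2⟩ : ℍ) (mk_ne_zero_re (by norm_num))

/-- The quaternion `(1+i)/√2` as a unit. -/
def e1iU : ℍˣ :=
  Units.mk0 (⟨1/Real.sqrt 2, 1/Real.sqrt 2, 0, 0⟩ : ℍ)
    (mk_ne_zero_re (by positivity))

/-- The quaternion `(j-k)/√2` as a unit. -/
def jmkU : ℍˣ :=
  Units.mk0 (⟨0, 0, 1/Real.sqrt 2, -(1/Real.sqrt 2)⟩ : ℍ)
    (mk_ne_zero_imJ (by positivity))

/-- The quaternion `(1 + τ i + σ j)/2`, `τ = (1+√5)/2`, `σ = (1-√5)/2`, as a unit. -/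
def iotaU : ℍˣ :=
  Units.mk0 (⟨1/2, ((1+Real.sqrt 5)/2)/2, ((1-Real.sqrt 5)/2)/2, 0⟩ : ℍ)
    (mk_ne_zero_re (by norm_num))

lemma omega_ne_zero (n : ℕ) :
    (⟨Real.cos (Real.pi / n), Real.sin (Real.pi / n), 0, 0⟩ : ℍ) ≠ 0 := by
  intro h
  have h1 : Real.cos (Real.pi / n) = 0 := congrArg QuaternionAlgebra.re h
  have h2 : Real.sin (Real.pi / n) = 0 := congrArg QuaternionAlgebra.imI h
  have := Real.sin_sq_add_cos_sq (Real.pi / n)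
  rw [h1, h2] at this
  norm_num at this

/-- The primitive `2n`-th root of unity `ω = cos(π/n) + sin(π/n) i` as a unit quaternion. -/
def omegaU (n : ℕ) : ℍˣ :=
  Units.mk0 (⟨Real.cos (Real.pi / n), Real.sin (Real.pi / n), 0, 0⟩ : ℍ) (omega_ne_zero n)

/-- The dicyclic group `𝒟ₙ = ⟨ω, j⟩` of order `4n`. -/
def dicyclic (n : ℕ) : Subgroup ℍˣ := Subgroup.closure {omegaU n, jU}

/-- The binary tetrahedral group `𝒯`. -/
def binTet : Subgroup ℍˣ := Subgroup.closure {iU, zetaU}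

/-- The binary octahedral group `𝒪`. -/
def binOct : Subgroup ℍˣ := Subgroup.closure {e1iU, zetaU}

/-- The binary icosahedral group `ℐ`. -/
def binIco : Subgroup ℍˣ := Subgroup.closure {iU, zetaU, iotaU}

/-- `GL₂(ℍ)` as the unit group of the matrix ring. -/
abbrev GL2H := (Matrix (Fin 2) (Fin 2) ℍ)ˣ

def M2 (b : ℍˣ) : Matrix (Fin 2) (Fin 2) ℍ := !![0, (b : ℍ); ((b⁻¹ : ℍˣ) : ℍ), 0]

lemma M2_mul_self (b : ℍˣ) : M2 b * M2 b = 1 := by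
  refine Matrix.ext fun i j => ?_
  fin_cases i <;> fin_cases j <;>
    simp [M2, Matrix.mul_apply, Fin.sum_univ_two, Matrix.one_apply]

/-- The matrix `M_b = [[0, b], [b⁻¹, 0]]` as an element of `GL₂(ℍ)`. -/
def Mb (b : ℍˣ) : GL2H := ⟨M2 b, M2 b, M2_mul_self b, M2_mul_self b⟩

def D1M (h : ℍˣ) : Matrix (Fin 2) (Fin 2) ℍ := !![(h : ℍ), 0; 0, 1]

lemma D1M_mul_inv (h : ℍˣ) : D1M h * D1M h⁻¹ = 1 := by
  refine Matrix.ext fun i j => ?_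
  fin_cases i <;> fin_cases j <;>
    simp [D1M, Matrix.mul_apply, Fin.sum_univ_two, Matrix.one_apply]

lemma D1M_inv_mul (h : ℍˣ) : D1M h⁻¹ * D1M h = 1 := by
  refine Matrix.ext fun i j => ?_
  fin_cases i <;> fin_cases j <;>
    simp [D1M, Matrix.mul_apply, Fin.sum_univ_two, Matrix.one_apply]

/-- The matrix `D₁(h) = diag(h, 1)` as an element of `GL₂(ℍ)`. -/
def D1 (h : ℍˣ) : GL2H := ⟨D1M h, D1M h⁻¹, D1M_mul_inv h, D1M_inv_mul h⟩

def D2M (h : ℍˣ) : Matrix (Fin 2) (Fin 2) ℍ := !![1, 0; 0, (h : ℍ)]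

lemma D2M_mul_inv (h : ℍˣ) : D2M h * D2M h⁻¹ = 1 := by
  refine Matrix.ext fun i j => ?_
  fin_cases i <;> fin_cases j <;>
    simp [D2M, Matrix.mul_apply, Fin.sum_univ_two, Matrix.one_apply]

lemma D2M_inv_mul (h : ℍˣ) : D2M h⁻¹ * D2M h = 1 := by
  refine Matrix.ext fun i j => ?_
  fin_cases i <;> fin_cases j <;>
    simp [D2M, Matrix.mul_apply, Fin.sum_univ_two, Matrix.one_apply]

/-- The matrix `D₂(h) = diag(1, h)` as an element of `GL₂(ℍ)`. -/
def D2 (h : ℍˣ) : GL2H := ⟨D2M h, D2M h⁻¹, D2M_mul_inv h, D2M_inv_mul h⟩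

/-- The group `G(K, L, H)`, generated by `D₁(H)`, `D₂(H)` and `M_L`. -/
def GKLH (H : Subgroup ℍˣ) (L : Set ℍˣ) : Subgroup GL2H :=
  Subgroup.closure (D1 '' (H : Set ℍˣ) ∪ D2 '' (H : Set ℍˣ) ∪ Mb '' L)

/-- `G(K,L,H)` is in canonical form: every `b ∈ K` with `M_b ∈ G(K,L,H)` lies in `L`. -/
def CanonicalForm (K : Subgroup ℍˣ) (H : Subgroup ℍˣ) (L : Set ℍˣ) : Prop :=
  ∀ b : ℍˣ, b ∈ K → Mb b ∈ GKLH H L → b ∈ L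

/-- A reflection: a non-identity element fixing a nonzero vector. -/
def IsReflection (g : GL2H) : Prop :=
  g ≠ 1 ∧ ∃ v : Fin 2 → ℍ, v ≠ 0 ∧ Matrix.mulVec (Units.val g) v = v

/-- The number of reflections in a subgroup of `GL₂(ℍ)`. -/
def reflCount (G : Subgroup GL2H) : ℕ :=
  Nat.card {g : GL2H // g ∈ G ∧ IsReflection g}

/-- The index set `Ω_n`. -/
def OmegaMem (n a b : ℕ) : Prop :=
  1 ≤ a ∧ a ≤ b ∧ b ≤ n ∧ a ∣ n ∧ b ∣ n ∧ Nat.gcd a b = 1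

/-- The reflection system `L⁽ⁿ⁾₍ₐ,ᵦ₎`. -/
def Lab (n a b : ℕ) : Set ℍˣ :=
  {x | ∃ m, 1 ≤ m ∧ m ≤ 2 * n / a ∧ x = omegaU n ^ (m * a)} ∪
  {x | ∃ l, 1 ≤ l ∧ l ≤ 2 * n / b ∧ x = omegaU n ^ (l * b) * jU}

/-- The reflection group `G(n, a, b, r)`. -/
def Gnabr (n a b r : ℕ) : Subgroup GL2H :=
  Subgroup.closure
    ({Mb 1, Mb (omegaU n ^ a), Mb jU, Mb (omegaU n ^ b * jU), D1 (omegaU n ^ (2 * n / r))})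

/-! Every product of the matrices `M_b = [[0, b], [b⁻¹, 0]]`, `b ∈ K`, is monomial with nonzero
entries `p, q ∈ K`, and the class of `p q` in the abelianization of `K` is multiplicative on such
matrices and trivial on each `M_b`. For `D₁(h) = diag(h, 1)` this class is that of `h`, so
`h ∈ [K, K]`. Conversely `D₁(u c u⁻¹ c⁻¹) = M_u M_1 M_c M_{cu}`. -/

namespace Matrix

variable {R : Type*} [Semiring R]

def diagUnit (p q : Rˣ) : (Matrix (Fin 2) (Fin 2) R)ˣ where
  val := !![(p : R), 0; 0, (q : R)]
  inv := !![((p⁻¹ : Rˣ) : R), 0; 0, ((q⁻¹ : Rˣ) : R)]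
  val_inv := by ext i j; fin_cases i <;> fin_cases j <;> simp [mul_apply, Fin.sum_univ_two]
  inv_val := by ext i j; fin_cases i <;> fin_cases j <;> simp [mul_apply, Fin.sum_univ_two]

def antidiagUnit (p q : Rˣ) : (Matrix (Fin 2) (Fin 2) R)ˣ where
  val := !![0, (p : R); (q : R), 0]
  inv := !![0, ((q⁻¹ : Rˣ) : R); ((p⁻¹ : Rˣ) : R), 0]
  val_inv := by ext i j; fin_cases i <;> fin_cases j <;> simp [mul_apply, Fin.sum_univ_two]
  inv_val := by ext i j; fin_cases i <;> fin_cases j <;> simp [mul_apply, Fin.sum_univ_two]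

lemma diagUnit_one : diagUnit (1 : Rˣ) 1 = 1 := by
  ext i j; fin_cases i <;> fin_cases j <;> simp [diagUnit]

lemma diagUnit_mul_diagUnit (p q p' q' : Rˣ) :
    diagUnit p q * diagUnit p' q' = diagUnit (p * p') (q * q') := by
  ext i j; fin_cases i <;> fin_cases j <;> simp [diagUnit, mul_apply, Fin.sum_univ_two]

lemma diagUnit_mul_antidiagUnit (p q p' q' : Rˣ) :
    diagUnit p q * antidiagUnit p' q' = antidiagUnit (p * p') (q * q') := by
  ext i j; fin_cases i <;> fin_cases j <;>
    simp [diagUnit, antidiagUnit, mul_apply, Fin.sum_univ_two]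

lemma antidiagUnit_mul_diagUnit (p q p' q' : Rˣ) :
    antidiagUnit p q * diagUnit p' q' = antidiagUnit (p * q') (q * p') := by
  ext i j; fin_cases i <;> fin_cases j <;>
    simp [diagUnit, antidiagUnit, mul_apply, Fin.sum_univ_two]

lemma antidiagUnit_mul_antidiagUnit (p q p' q' : Rˣ) :
    antidiagUnit p q * antidiagUnit p' q' = diagUnit (p * q') (q * p') := by
  ext i j; fin_cases i <;> fin_cases j <;>
    simp [diagUnit, antidiagUnit, mul_apply, Fin.sum_univ_two]

lemma diagUnit_inv (p q : Rˣ) : (diagUnit p q)⁻¹ = diagUnit p⁻¹ q⁻¹ :=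
  inv_eq_of_mul_eq_one_right <| by rw [diagUnit_mul_diagUnit, mul_inv_cancel, mul_inv_cancel,
    diagUnit_one]

lemma antidiagUnit_inv (p q : Rˣ) : (antidiagUnit p q)⁻¹ = antidiagUnit q⁻¹ p⁻¹ :=
  inv_eq_of_mul_eq_one_right <| by
    rw [antidiagUnit_mul_antidiagUnit, mul_inv_cancel, mul_inv_cancel, diagUnit_one]

lemma diagUnit_inj {p q p' q' : Rˣ} : diagUnit p q = diagUnit p' q' ↔ p = p' ∧ q = q' := by
  refine ⟨fun h => ?_, fun ⟨hp, hq⟩ => hp ▸ hq ▸ rfl⟩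
  have h00 := congrArg (fun g : (Matrix (Fin 2) (Fin 2) R)ˣ => g.val 0 0) h
  have h11 := congrArg (fun g : (Matrix (Fin 2) (Fin 2) R)ˣ => g.val 1 1) h
  exact ⟨Units.ext (by simpa [diagUnit] using h00), Units.ext (by simpa [diagUnit] using h11)⟩

lemma diagUnit_ne_antidiagUnit [Nontrivial R] (p q p' q' : Rˣ) :
    diagUnit p q ≠ antidiagUnit p' q' := fun h => by
  simpa [diagUnit, antidiagUnit] using
    congrArg (fun g : (Matrix (Fin 2) (Fin 2) R)ˣ => g.val 0 0) h

def diagUnitLeft : Rˣ →* (Matrix (Fin 2) (Fin 2) R)ˣ where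
  toFun h := diagUnit h 1
  map_one' := diagUnit_one
  map_mul' a b := by rw [diagUnit_mul_diagUnit, mul_one]

end Matrix

lemma Subgroup.mem_commutator_iff_abelianization_of_eq_one {G : Type*} [Group G]
    {K : Subgroup G} {h : G} (hK : h ∈ K) :
    h ∈ ⁅K, K⁆ ↔ Abelianization.of (⟨h, hK⟩ : K) = 1 := by
  rw [← K.map_subtype_commutator, ← Abelianization.ker_of, ← MonoidHom.mem_ker,
    Subgroup.mem_map]
  exact ⟨fun ⟨_, hx, e⟩ => by cases e; exact hx, fun hx => ⟨_, hx, rfl⟩⟩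

section MonomialDetKer

open Matrix

variable {R : Type*} [Semiring R]

def monomialDetKer (K : Subgroup Rˣ) : Subgroup (Matrix (Fin 2) (Fin 2) R)ˣ where
  carrier := {g | ∃ p q : K, Abelianization.of p * Abelianization.of q = 1 ∧
    (g = diagUnit (p : Rˣ) q ∨ g = antidiagUnit (p : Rˣ) q)}
  one_mem' := ⟨1, 1, by simp, Or.inl diagUnit_one.symm⟩
  mul_mem' := by
    rintro _ _ ⟨p, q, hpq, rfl | rfl⟩ ⟨p', q', hpq', rfl | rfl⟩
    · refine ⟨p * p', q * q', ?_, Or.inl (diagUnit_mul_diagUnit ..)⟩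
      rw [map_mul, map_mul, mul_mul_mul_comm, hpq, hpq', one_mul]
    · refine ⟨p * p', q * q', ?_, Or.inr (diagUnit_mul_antidiagUnit ..)⟩
      rw [map_mul, map_mul, mul_mul_mul_comm, hpq, hpq', one_mul]
    · refine ⟨p * q', q * p', ?_, Or.inr (antidiagUnit_mul_diagUnit ..)⟩
      rw [map_mul, map_mul, mul_mul_mul_comm, hpq, one_mul, mul_comm, hpq']
    · refine ⟨p * q', q * p', ?_, Or.inl (antidiagUnit_mul_antidiagUnit ..)⟩
      rw [map_mul, map_mul, mul_mul_mul_comm, hpq, one_mul, mul_comm, hpq']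
  inv_mem' := by
    rintro _ ⟨p, q, hpq, rfl | rfl⟩
    · refine ⟨p⁻¹, q⁻¹, ?_, Or.inl (diagUnit_inv ..)⟩
      rw [map_inv, map_inv, ← mul_inv, hpq, inv_one]
    · refine ⟨q⁻¹, p⁻¹, ?_, Or.inr (antidiagUnit_inv ..)⟩
      rw [map_inv, map_inv, ← _root_.mul_inv_rev, hpq, inv_one]

lemma closure_antidiagUnit_inv_le_monomialDetKer (K : Subgroup Rˣ) :
    Subgroup.closure ((fun b => antidiagUnit b b⁻¹) '' (K : Set Rˣ)) ≤ monomialDetKer K := by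
  rw [Subgroup.closure_le]
  rintro _ ⟨b, hb, rfl⟩
  exact ⟨⟨b, hb⟩, ⟨b, hb⟩⁻¹, by rw [← map_mul, mul_inv_cancel, map_one], Or.inr rfl⟩

open scoped commutatorElement in
lemma diagUnit_commutatorElement (u c : Rˣ) :
    diagUnit ⁅u, c⁆ 1 = antidiagUnit u u⁻¹ * antidiagUnit 1 1⁻¹ * antidiagUnit c c⁻¹ *
      antidiagUnit (c * u) (c * u)⁻¹ := by
  rw [antidiagUnit_mul_antidiagUnit, diagUnit_mul_antidiagUnit, antidiagUnit_mul_antidiagUnit,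
    commutatorElement_def]
  congr 1 <;> group

lemma commutator_le_comap_closure_antidiagUnit_inv (K : Subgroup Rˣ) :
    ⁅K, K⁆ ≤ (Subgroup.closure ((fun b => antidiagUnit b b⁻¹) '' (K : Set Rˣ))).comap
      diagUnitLeft := by
  have hgen : ∀ b ∈ K, antidiagUnit b b⁻¹ ∈
      Subgroup.closure ((fun b => antidiagUnit b b⁻¹) '' (K : Set Rˣ)) :=
    fun b hb => Subgroup.subset_closure ⟨b, hb, rfl⟩
  refine Subgroup.commutator_le.mpr fun u hu c hc => ?_
  rw [Subgroup.mem_comap, diagUnitLeft, MonoidHom.coe_mk, OneHom.coe_mk,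
    diagUnit_commutatorElement]
  exact mul_mem (mul_mem (mul_mem (hgen u hu) (hgen 1 K.one_mem)) (hgen c hc))
    (hgen _ (mul_mem hc hu))

theorem diagUnit_mem_closure_antidiagUnit_inv_iff [Nontrivial R] (K : Subgroup Rˣ) (h : Rˣ) :
    diagUnit h 1 ∈ Subgroup.closure ((fun b => antidiagUnit b b⁻¹) '' (K : Set Rˣ)) ↔
      h ∈ ⁅K, K⁆ := by
  refine ⟨fun hh => ?_, fun hh => commutator_le_comap_closure_antidiagUnit_inv K hh⟩
  obtain ⟨p, q, hpq, hd | ha⟩ := closure_antidiagUnit_inv_le_monomialDetKer K hh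
  · obtain ⟨rfl, hq⟩ := diagUnit_inj.mp hd
    rw [Subgroup.mem_commutator_iff_abelianization_of_eq_one p.2]
    simpa [show q = 1 from Subtype.ext hq.symm] using hpq
  · exact (diagUnit_ne_antidiagUnit _ _ _ _ ha).elim

end MonomialDetKer

theorem statement_5_general (K : Subgroup ℍˣ) :
    {h : ℍˣ | h ∈ K ∧ D1 h ∈ Subgroup.closure (Mb '' (K : Set ℍˣ))} =
      ((⁅K, K⁆ : Subgroup ℍˣ) : Set ℍˣ) := by
  have hMb : Mb = fun b => Matrix.antidiagUnit b b⁻¹ := funext fun _ => Units.ext rfl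
  have hD1 : D1 = fun h => Matrix.diagUnit h 1 :=
    funext fun _ => Units.ext (by simp [D1, D1M, Matrix.diagUnit])
  ext h
  simp only [Set.mem_ofPred_eq, SetLike.mem_coe, hMb, hD1,
    diagUnit_mem_closure_antidiagUnit_inv_iff]
  exact and_iff_right_of_imp fun hh => K.commutator_le_self hh

theorem statement_5 (K : Subgroup ℍˣ) (hK : Finite K) :
    {h : ℍˣ | h ∈ K ∧ D1 h ∈ Subgroup.closure (Mb '' (K : Set ℍˣ))} =
      ((⁅K, K⁆ : Subgroup ℍˣ) : Set ℍˣ) :=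
  statement_5_general K

end
end

section
/- Let n ≥ 2. Every reflection system L for the dicyclic group 𝒟_n is equivalent to L⁽ⁿ⁾₍ₐ,ᵦ₎ for some (a, b) ∈ Ω_n, where two reflection systems L, L' for 𝒟_n are called equivalent if there exist a group automorphism φ of 𝒟_n and an element x ∈ L such that L' = φ(xL) or L' = φ(Lx). -/
noncomputable section

open Matrix

local notation "ℍ" => Quaternion ℝ

/-- The image of a subset of the ambient group contained in `K` under an automorphism of `K`. -/
def sgImage {G : Type*} [Group G] {K : Subgroup G} (φ : K ≃* K) (S : Set G) : Set G :=
  {y | ∃ g : K, (g : G) ∈ S ∧ y = ((φ g : K) : G)}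

/-!
Every element of `𝒟ₙ` is `ωᵏ` or `ωᵏ j`. Fix a reflection `ω^β j ∈ L`. The exponent sets
`{k | ωᵏ ∈ L}` and `{k | ω^(k+β) j ∈ L}` contain `0` and are closed under `(x, y) ↦ 2x - y`,
which in a cyclic group forces them to be subgroups `aℤ` and `bℤ`. The elements
`(ω^β j) ∘ 1 = ωⁿ` and `1 ∘ (ω^β j) = ω^(n+β) j` of `L` give `a, b ∣ n`, and since `L`
generates `𝒟ₙ`, `gcd(a, b) = 1`. Conjugation by a square root of `ω^(-β)` in the circle
`{cos θ + sin θ i}` normalises `𝒟ₙ` and removes the twist `β`; when `a > b`, right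
multiplication by `ω^β j` first swaps `a` and `b`.
-/

theorem AddSubgroup.add_two_nsmul_mem_of_sub_add_mem {A : Type*} [AddCommGroup A] {S : Set A}
    (h0 : 0 ∈ S) (hS : ∀ x ∈ S, ∀ y ∈ S, x - y + x ∈ S) {h : A}
    (hh : h ∈ AddSubgroup.closure S) {x : A} (hx : x ∈ S) : x + 2 • h ∈ S := by
  have hneg : ∀ x ∈ S, -x ∈ S := fun x hx => by simpa using hS 0 h0 x hx
  induction hh using AddSubgroup.closure_induction generalizing x with
  | mem y hy =>
    convert hS y hy (-x) (hneg x hx) using 1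
    abel
  | zero => simpa using hx
  | add y z _ _ ihy ihz =>
    convert ihz (ihy hx) using 1
    rw [smul_add, add_assoc]
  | neg y _ ih =>
    convert hneg _ (ih (hneg x hx)) using 1
    rw [smul_neg, neg_add, neg_neg]

theorem IsAddCyclic.exists_zmultiples_eq_of_sub_add_mem {A : Type*} [AddCommGroup A]
    [IsAddCyclic A] {S : Set A} (h0 : 0 ∈ S) (hS : ∀ x ∈ S, ∀ y ∈ S, x - y + x ∈ S) :
    ∃ g : A, (AddSubgroup.zmultiples g : Set A) = S := by
  obtain ⟨g, hg⟩ :=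
    (AddSubgroup.closure S).isAddCyclic_iff_exists_zmultiples_eq_top.mp inferInstance
  have htrans : ∀ h ∈ AddSubgroup.closure S, ∀ x ∈ S, x + 2 • h ∈ S := fun _ hh _ hx =>
    AddSubgroup.add_two_nsmul_mem_of_sub_add_mem h0 hS hh hx
  have hmul : ∀ k : ℤ, k • g ∈ AddSubgroup.closure S := fun k =>
    hg ▸ AddSubgroup.zsmul_mem_zmultiples g k
  have hparity : ∀ k : ℤ, ∃ q : ℤ, k • g = 2 • (q • g) ∨ k • g = g + 2 • (q • g) := by
    intro k
    obtain ⟨q, rfl | rfl⟩ := Int.even_or_odd' k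
    · exact ⟨q, Or.inl (by rw [mul_zsmul, two_nsmul, two_zsmul])⟩
    · exact ⟨q, Or.inr (by rw [add_zsmul, mul_zsmul, one_zsmul, two_nsmul, two_zsmul, add_comm])⟩
  -- Otherwise `S ⊆ 2H` for `H = zmultiples g`, so `H = 2H` and `g ∈ 2H ⊆ S`.
  have hgS : g ∈ S := by
    by_contra hgS
    have hSle : S ⊆ AddSubgroup.zmultiples (2 • g) := by
      intro s hs
      obtain ⟨l, rfl⟩ := AddSubgroup.mem_zmultiples_iff.mp
        (hg ▸ AddSubgroup.subset_closure hs : s ∈ AddSubgroup.zmultiples g)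
      obtain ⟨q, hq | hq⟩ := hparity l
      · exact ⟨q, by rw [hq, smul_comm]⟩
      · refine absurd ?_ hgS
        convert htrans _ (hmul (-q)) _ hs using 1
        rw [hq, neg_zsmul]; abel
    obtain ⟨m, hm⟩ := AddSubgroup.mem_zmultiples_iff.mp
      ((AddSubgroup.closure_le _).mpr hSle (hg ▸ AddSubgroup.mem_zmultiples g))
    apply hgS
    rw [← hm, smul_comm, ← zero_add (2 • _)]
    exact htrans _ (hmul m) 0 h0
  refine ⟨g, Set.Subset.antisymm (fun h hh => ?_) (hg ▸ AddSubgroup.subset_closure)⟩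
  obtain ⟨k, rfl⟩ := AddSubgroup.mem_zmultiples_iff.mp hh
  obtain ⟨q, hq | hq⟩ := hparity k
  · rw [hq, ← zero_add (2 • _)]; exact htrans _ (hmul q) 0 h0
  · rw [hq]; exact htrans _ (hmul q) g hgS

theorem Int.exists_natCast_dvd_iff_of_sub_add_mem {S : Set ℤ} (h0 : 0 ∈ S)
    (hS : ∀ x ∈ S, ∀ y ∈ S, x - y + x ∈ S) : ∃ a : ℕ, ∀ k, k ∈ S ↔ (a : ℤ) ∣ k := by
  obtain ⟨g, hg⟩ := IsAddCyclic.exists_zmultiples_eq_of_sub_add_mem h0 hS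
  exact ⟨g.natAbs, fun k => by rw [← hg, SetLike.mem_coe, Int.mem_zmultiples_iff, Int.natAbs_dvd]⟩

section DicyclicPair

variable {G : Type*} [Group G]

structure IsDicyclicPair (n : ℕ) (w s : G) : Prop where
  orderOf_eq : orderOf w = 2 * n
  mul_self : s * s = w ^ n
  conj_eq : s * w * s⁻¹ = w⁻¹
  notMem_zpowers : s ∉ Subgroup.zpowers w

-- `reflSet ω j a b 0` is `L⁽ⁿ⁾₍ₐ,ᵦ₎`, with the exponents ranging over all multiples in `ℤ`.
def reflSet (w s : G) (a b : ℕ) (β : ℤ) : Set G :=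
  {x | ∃ k : ℤ, (a : ℤ) ∣ k ∧ x = w ^ k} ∪ {x | ∃ k : ℤ, (b : ℤ) ∣ k ∧ x = w ^ (k + β) * s}

theorem circ_zpow_zpow (w : G) (k l : ℤ) : circ (w ^ k) (w ^ l) = w ^ (k - l + k) := by
  simp only [circ, ← _root_.zpow_neg, ← _root_.zpow_add, sub_eq_add_neg]

namespace IsDicyclicPair

variable {n : ℕ} {w s : G}

theorem mul_zpow (h : IsDicyclicPair n w s) (k : ℤ) : s * w ^ k = w ^ (-k) * s := by
  rw [_root_.zpow_neg, ← _root_.inv_zpow, ← h.conj_eq, conj_zpow, inv_mul_cancel_right]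

theorem zpow_mul_mul_zpow (h : IsDicyclicPair n w s) (k l : ℤ) :
    w ^ k * s * w ^ l = w ^ (k - l) * s := by
  rw [mul_assoc, h.mul_zpow, ← mul_assoc, ← _root_.zpow_add, sub_eq_add_neg]

theorem zpow_mul_mul_zpow_mul (h : IsDicyclicPair n w s) (k l : ℤ) :
    w ^ k * s * (w ^ l * s) = w ^ (k - l + n) := by
  rw [← mul_assoc, h.zpow_mul_mul_zpow, mul_assoc, h.mul_self, ← zpow_natCast, ← _root_.zpow_add]

theorem inv_zpow_mul (h : IsDicyclicPair n w s) (k : ℤ) :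
    (w ^ k * s)⁻¹ = w ^ (k + n) * s := by
  refine inv_eq_of_mul_eq_one_left ?_
  rw [h.zpow_mul_mul_zpow_mul, show k + n - k + n = ((2 * n : ℕ) : ℤ) by push_cast; ring,
    zpow_natCast, ← h.orderOf_eq, pow_orderOf_eq_one]

theorem circ_zpow_mul_zpow_mul (h : IsDicyclicPair n w s) (k l : ℤ) :
    circ (w ^ k * s) (w ^ l * s) = w ^ (k - l + k) * s := by
  rw [circ, h.inv_zpow_mul, h.zpow_mul_mul_zpow_mul, ← mul_assoc, ← _root_.zpow_add]
  congr 2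
  ring

def reflSetSubgroup (h : IsDicyclicPair n w s) (d : ℕ) (hd : (d : ℤ) ∣ n) (β : ℤ) :
    Subgroup G where
  carrier := reflSet w s d d β
  one_mem' := Or.inl ⟨0, dvd_zero _, (zpow_zero w).symm⟩
  mul_mem' := by
    rintro _ _ (⟨k, hk, rfl⟩ | ⟨k, hk, rfl⟩) (⟨l, hl, rfl⟩ | ⟨l, hl, rfl⟩)
    · exact Or.inl ⟨k + l, dvd_add hk hl, (_root_.zpow_add w k l).symm⟩
    · refine Or.inr ⟨k + l, dvd_add hk hl, ?_⟩
      rw [← mul_assoc, ← _root_.zpow_add, add_assoc]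
    · refine Or.inr ⟨k - l, dvd_sub hk hl, ?_⟩
      rw [h.zpow_mul_mul_zpow]
      ring_nf
    · refine Or.inl ⟨k - l + n, dvd_add (dvd_sub hk hl) hd, ?_⟩
      rw [h.zpow_mul_mul_zpow_mul]
      ring_nf
  inv_mem' := by
    rintro _ (⟨k, hk, rfl⟩ | ⟨k, hk, rfl⟩)
    · exact Or.inl ⟨-k, dvd_neg.mpr hk, (_root_.zpow_neg w k).symm⟩
    · refine Or.inr ⟨k + n, dvd_add hk hd, ?_⟩
      rw [h.inv_zpow_mul]
      ring_nf

theorem closure_pair_le (h : IsDicyclicPair n w s) :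
    Subgroup.closure {w, s} ≤ h.reflSetSubgroup 1 (one_dvd _) 0 := by
  rw [Subgroup.closure_le, Set.insert_subset_iff, Set.singleton_subset_iff]
  exact ⟨Or.inl ⟨1, one_dvd _, (zpow_one w).symm⟩,
    Or.inr ⟨0, dvd_zero _, by rw [zero_add, zpow_zero, one_mul]⟩⟩

theorem exists_of_mem_closure_pair (h : IsDicyclicPair n w s) {x : G}
    (hx : x ∈ Subgroup.closure {w, s}) : ∃ k : ℤ, x = w ^ k ∨ x = w ^ k * s := by
  obtain ⟨k, -, hk⟩ | ⟨k, -, hk⟩ := h.closure_pair_le hx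
  · exact ⟨k, Or.inl hk⟩
  · exact ⟨k, Or.inr (by rw [hk, add_zero])⟩

theorem zpow_ne_zpow_mul (h : IsDicyclicPair n w s) (k l : ℤ) : w ^ k ≠ w ^ l * s := by
  intro hkl
  apply h.notMem_zpowers
  rw [eq_inv_mul_iff_mul_eq.mpr hkl.symm, ← _root_.zpow_neg, ← _root_.zpow_add]
  exact Subgroup.zpow_mem_zpowers w _

theorem exists_zpow_mul_mem (h : IsDicyclicPair n w s) {L : Set G}
    (hL : Subgroup.closure L = Subgroup.closure {w, s}) : ∃ β : ℤ, w ^ β * s ∈ L := by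
  by_contra! hβ
  have hLw : L ⊆ Subgroup.zpowers w := by
    intro x hx
    obtain ⟨k, rfl | rfl⟩ := h.exists_of_mem_closure_pair (hL ▸ Subgroup.subset_closure hx)
    · exact Subgroup.zpow_mem_zpowers w k
    · exact absurd hx (hβ k)
  have hle : Subgroup.closure {w, s} ≤ Subgroup.zpowers w :=
    hL ▸ (Subgroup.closure_le _).mpr hLw
  exact h.notMem_zpowers (hle (Subgroup.subset_closure (by simp)))

theorem reflSet_eq_of_circClosed (h : IsDicyclicPair n w s) {L : Set G}
    (hLsub : L ⊆ Subgroup.closure {w, s}) (hcirc : CircClosed L) (h1 : 1 ∈ L) {β : ℤ}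
    (hβ : w ^ β * s ∈ L) : ∃ a b : ℕ, a ∣ n ∧ b ∣ n ∧ L = reflSet w s a b β := by
  obtain ⟨a, ha⟩ := Int.exists_natCast_dvd_iff_of_sub_add_mem (S := {k | w ^ k ∈ L})
    (by simpa using h1) (fun x hx y hy => by simpa [circ_zpow_zpow] using hcirc _ hx _ hy)
  obtain ⟨b, hb⟩ := Int.exists_natCast_dvd_iff_of_sub_add_mem (S := {k | w ^ (k + β) * s ∈ L})
    (by simpa using hβ) (fun x hx y hy => by
      have := hcirc _ hx _ hy
      rw [h.circ_zpow_mul_zpow_mul] at this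
      show w ^ (x - y + x + β) * s ∈ L
      convert this using 3
      ring)
  have hna : w ^ (n : ℤ) ∈ L := by
    have := hcirc _ hβ 1 h1
    rwa [circ, inv_one, mul_one, h.zpow_mul_mul_zpow_mul, sub_self, zero_add] at this
  have hnb : w ^ ((n : ℤ) + β) * s ∈ L := by
    have := hcirc 1 h1 _ hβ
    rwa [circ, one_mul, mul_one, h.inv_zpow_mul, add_comm] at this
  refine ⟨a, b, Int.natCast_dvd_natCast.mp ((ha _).mp hna),
    Int.natCast_dvd_natCast.mp ((hb _).mp hnb), ?_⟩
  ext x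
  constructor
  · intro hx
    obtain ⟨k, rfl | rfl⟩ := h.exists_of_mem_closure_pair (hLsub hx)
    · exact Or.inl ⟨k, (ha k).mp hx, rfl⟩
    · refine Or.inr ⟨k - β, (hb _).mp ?_, by rw [sub_add_cancel]⟩
      rwa [Set.mem_ofPred_eq, sub_add_cancel]
  · rintro (⟨k, hk, rfl⟩ | ⟨k, hk, rfl⟩)
    · exact (ha k).mpr hk
    · exact (hb k).mpr hk

theorem coprime_of_closure_reflSet (h : IsDicyclicPair n w s) {a b : ℕ} {β : ℤ}
    (ha : a ∣ n)
    (hgen : Subgroup.closure (reflSet w s a b β) = Subgroup.closure {w, s}) : a.Coprime b := by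
  have hdn : a.gcd b ∣ n := (Nat.gcd_dvd_left a b).trans ha
  have hsub : reflSet w s a b β ⊆
      h.reflSetSubgroup (a.gcd b) (Int.natCast_dvd_natCast.mpr hdn) β := by
    have hda : (a.gcd b : ℤ) ∣ a := Int.natCast_dvd_natCast.mpr (Nat.gcd_dvd_left a b)
    have hdb : (a.gcd b : ℤ) ∣ b := Int.natCast_dvd_natCast.mpr (Nat.gcd_dvd_right a b)
    rintro _ (⟨k, hk, rfl⟩ | ⟨k, hk, rfl⟩)
    · exact Or.inl ⟨k, hda.trans hk, rfl⟩
    · exact Or.inr ⟨k, hdb.trans hk, rfl⟩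
  have hw : w ∈ reflSet w s (a.gcd b) (a.gcd b) β :=
    (Subgroup.closure_le _).mpr hsub (hgen ▸ Subgroup.subset_closure (by simp))
  obtain ⟨k, hk, hwk⟩ | ⟨k, -, hwk⟩ := hw
  · have h2n : ((2 * n : ℕ) : ℤ) ∣ k - 1 := by
      rw [← h.orderOf_eq, orderOf_dvd_iff_zpow_eq_one, _root_.zpow_sub, ← hwk, zpow_one,
        mul_inv_cancel]
    have hd2n : (a.gcd b : ℤ) ∣ (2 * n : ℕ) := Int.natCast_dvd_natCast.mpr (hdn.mul_left 2)
    have hd1 : (a.gcd b : ℤ) ∣ 1 := by simpa using dvd_sub hk (hd2n.trans h2n)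
    exact Nat.dvd_one.mp (Int.natCast_dvd_natCast.mp hd1)
  · exact (h.zpow_ne_zpow_mul 1 (k + β) ((zpow_one w).trans hwk)).elim

theorem image_mul_reflSet (h : IsDicyclicPair n w s) (a : ℕ) {b : ℕ} (hb : b ∣ n) (β : ℤ) :
    (· * (w ^ β * s)) '' reflSet w s a b β = reflSet w s b a β := by
  have hb' : (b : ℤ) ∣ n := Int.natCast_dvd_natCast.mpr hb
  ext x
  constructor
  · rintro ⟨_, ⟨k, hk, rfl⟩ | ⟨k, hk, rfl⟩, rfl⟩
    · exact Or.inr ⟨k, hk, by dsimp only; rw [← mul_assoc, ← _root_.zpow_add]⟩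
    · refine Or.inl ⟨k + n, dvd_add hk hb', ?_⟩
      dsimp only
      rw [h.zpow_mul_mul_zpow_mul]
      congr 1
      ring
  · rintro (⟨k, hk, rfl⟩ | ⟨k, hk, rfl⟩)
    · refine ⟨w ^ (k - n + β) * s, Or.inr ⟨k - n, dvd_sub hk hb', rfl⟩, ?_⟩
      dsimp only
      rw [h.zpow_mul_mul_zpow_mul]
      congr 1
      ring
    · exact ⟨w ^ k, Or.inl ⟨k, hk, rfl⟩, by dsimp only; rw [← mul_assoc, ← _root_.zpow_add]⟩

theorem exists_omegaMem_reflSet_eq (h : IsDicyclicPair n w s) (hn : 0 < n) {L : Set G}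
    (hL : IsReflectionSystem (Subgroup.closure {w, s}) L) :
    ∃ a b : ℕ, ∃ β : ℤ, OmegaMem n a b ∧ ∃ x ∈ L,
      reflSet w s a b β = (x * ·) '' L ∨ reflSet w s a b β = (· * x) '' L := by
  obtain ⟨hgen, hcirc, h1⟩ := hL
  have hLsub : L ⊆ Subgroup.closure {w, s} := hgen ▸ Subgroup.subset_closure
  obtain ⟨β, hβ⟩ := h.exists_zpow_mul_mem hgen
  obtain ⟨a, b, ha, hb, rfl⟩ := h.reflSet_eq_of_circClosed hLsub hcirc h1 hβ
  have hab := h.coprime_of_closure_reflSet ha hgen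
  rcases le_total a b with hle | hle
  · exact ⟨a, b, β, ⟨Nat.pos_of_dvd_of_pos ha hn, hle, Nat.le_of_dvd hn hb, ha, hb, hab⟩,
      1, h1, Or.inl (by simp)⟩
  · exact ⟨b, a, β, ⟨Nat.pos_of_dvd_of_pos hb hn, hle, Nat.le_of_dvd hn ha, hb, ha, hab.symm⟩,
      _, hβ, Or.inr (h.image_mul_reflSet a hb β).symm⟩

end IsDicyclicPair

end DicyclicPair

section Conjugation

variable {G : Type*} [Group G]

theorem image_conj_reflSet {w s r : G} {γ : ℤ} (hw : MulAut.conj r w = w)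
    (hs : MulAut.conj r s = w ^ γ * s) (a b : ℕ) (β : ℤ) :
    MulAut.conj r '' reflSet w s a b β = reflSet w s a b (β + γ) := by
  have hconj : ∀ k : ℤ, MulAut.conj r (w ^ (k + β) * s) = w ^ (k + (β + γ)) * s := fun k => by
    rw [map_mul, map_zpow, hw, hs, ← mul_assoc, ← _root_.zpow_add, add_assoc]
  ext x
  constructor
  · rintro ⟨_, ⟨k, hk, rfl⟩ | ⟨k, hk, rfl⟩, rfl⟩
    · exact Or.inl ⟨k, hk, by rw [map_zpow, hw]⟩
    · exact Or.inr ⟨k, hk, hconj k⟩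
  · rintro (⟨k, hk, rfl⟩ | ⟨k, hk, rfl⟩)
    · exact ⟨w ^ k, Or.inl ⟨k, hk, rfl⟩, by rw [map_zpow, hw]⟩
    · exact ⟨_, Or.inr ⟨k, hk, rfl⟩, hconj k⟩

theorem map_conj_closure_pair {w s r : G} {γ : ℤ} (hw : MulAut.conj r w = w)
    (hs : MulAut.conj r s = w ^ γ * s) :
    (Subgroup.closure {w, s}).map (MulAut.conj r).toMonoidHom = Subgroup.closure {w, s} := by
  rw [MonoidHom.map_closure, Set.image_pair]
  change Subgroup.closure {MulAut.conj r w, MulAut.conj r s} = _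
  rw [hw, hs]
  have hw' : ∀ {x : G}, w ∈ Subgroup.closure {w, x} := Subgroup.subset_closure (by simp)
  have hs' : ∀ {x : G}, x ∈ Subgroup.closure {w, x} := Subgroup.subset_closure (by simp)
  apply le_antisymm <;> rw [Subgroup.closure_le, Set.insert_subset_iff, Set.singleton_subset_iff]
  · exact ⟨hw', mul_mem (zpow_mem hw' γ) hs'⟩
  · exact ⟨hw', by simpa using mul_mem (zpow_mem hw' (-γ)) (hs' (x := w ^ γ * s))⟩

def Subgroup.conjEquivOfMapEq {K : Subgroup G} {r : G}
    (hK : K.map (MulAut.conj r).toMonoidHom = K) : K ≃* K :=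
  (MulEquiv.subgroupMap (MulAut.conj r) K).trans (MulEquiv.subgroupCongr hK)

theorem sgImage_conjEquivOfMapEq {K : Subgroup G} {r : G}
    (hK : K.map (MulAut.conj r).toMonoidHom = K) {S : Set G} (hS : S ⊆ K) :
    sgImage (Subgroup.conjEquivOfMapEq hK) S = MulAut.conj r '' S := by
  ext y
  constructor
  · rintro ⟨g, hg, rfl⟩
    exact ⟨g, hg, rfl⟩
  · rintro ⟨x, hx, rfl⟩
    exact ⟨⟨x, hS hx⟩, hx, rfl⟩

end Conjugation

theorem exists_pow_mul_iff {G : Type*} [Group G] {w : G} {a N : ℕ} (ha : 0 < a) (hN : 0 < N)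
    (haN : a ∣ N) (hw : w ^ N = 1) (P : G → Prop) :
    (∃ m : ℕ, 1 ≤ m ∧ m ≤ N / a ∧ P (w ^ (m * a))) ↔ ∃ k : ℤ, (a : ℤ) ∣ k ∧ P (w ^ k) := by
  constructor
  · rintro ⟨m, -, -, hP⟩
    exact ⟨(m * a : ℕ), by push_cast; exact dvd_mul_left _ _, by rwa [zpow_natCast]⟩
  · obtain ⟨M, rfl⟩ := haN
    have hM : 0 < M := Nat.pos_of_mul_pos_left hN
    rintro ⟨_, ⟨q, rfl⟩, hP⟩
    have hr := Int.emod_nonneg (q - 1) (Int.natCast_ne_zero.mpr hM.ne')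
    have hr' := Int.emod_lt_of_pos (q - 1) (Int.natCast_pos.mpr hM)
    -- `m` is the representative of `q` modulo `M` in `[1, M]`
    refine ⟨((q - 1) % M).toNat + 1, by omega, ?_, ?_⟩
    · rw [Nat.mul_div_cancel_left M ha]
      omega
    · have hexp : (((((q - 1) % M).toNat + 1) * a : ℕ) : ℤ) =
          a * q + (a * M : ℕ) * (-((q - 1) / M)) := by
        push_cast
        rw [Int.toNat_of_nonneg hr, Int.emod_def]
        ring
      rwa [← zpow_natCast, hexp, _root_.zpow_add, _root_.zpow_mul w ((a * M : ℕ) : ℤ),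
        zpow_natCast, hw, _root_.one_zpow, mul_one]

section Quaternion

open Real

def Circle.toQuaternionUnits : Circle →* ℍˣ :=
  (Units.map (Quaternion.ofComplex : ℂ →* ℍ)).comp Circle.toUnits

theorem Circle.coe_toQuaternionUnits (z : Circle) :
    ((Circle.toQuaternionUnits z : ℍˣ) : ℍ) = Quaternion.ofComplex z := rfl

theorem val_jU : (jU : ℍ) = ⟨0, 0, 1, 0⟩ := rfl

theorem val_omegaU (n : ℕ) : (omegaU n : ℍ) = ⟨cos (π / n), sin (π / n), 0, 0⟩ := rfl

theorem omegaU_eq (n : ℕ) : omegaU n = Circle.toQuaternionUnits (Circle.exp (π / n)) := by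
  ext <;> simp only [val_omegaU, Circle.coe_toQuaternionUnits, Quaternion.coe_ofComplex,
    Quaternion.re_coeComplex, Quaternion.imI_coeComplex, Quaternion.imJ_coeComplex,
    Quaternion.imK_coeComplex, Circle.coe_exp, Complex.exp_ofReal_mul_I_re,
    Complex.exp_ofReal_mul_I_im]

theorem jU_mul_toQuaternionUnits (z : Circle) :
    jU * Circle.toQuaternionUnits z = Circle.toQuaternionUnits z⁻¹ * jU := by
  ext : 1
  rw [Units.val_mul, Units.val_mul, Circle.coe_toQuaternionUnits, Circle.coe_toQuaternionUnits,
    Circle.coe_inv_eq_conj]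
  apply Quaternion.ext <;>
    simp only [Quaternion.re_mul, Quaternion.imI_mul, Quaternion.imJ_mul, Quaternion.imK_mul] <;>
    simp [val_jU]

theorem jU_mul_self : jU * jU = Circle.toQuaternionUnits (Circle.exp π) := by
  ext : 1
  rw [Units.val_mul, Circle.coe_toQuaternionUnits]
  apply Quaternion.ext <;>
    simp only [Quaternion.re_mul, Quaternion.imI_mul, Quaternion.imJ_mul, Quaternion.imK_mul] <;>
    simp [val_jU]

theorem jU_notMem_range : jU ∉ Circle.toQuaternionUnits.range := by
  rintro ⟨z, hz⟩
  have := congrArg (fun u : ℍˣ => (u : ℍ).imJ) hz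
  simp [val_jU, Circle.coe_toQuaternionUnits] at this

theorem orderOf_omegaU {n : ℕ} (hn : 0 < n) : orderOf (omegaU n) = 2 * n := by
  have hinj : Function.Injective (Quaternion.ofComplex : ℂ →* ℍ) :=
    Quaternion.ofComplex.toRingHom.injective
  have hexp : Complex.exp (2 * π * Complex.I / (2 * n : ℕ)) = Circle.exp (π / n) := by
    rw [Circle.coe_exp]
    congr 1
    push_cast
    field_simp
  rw [← orderOf_units, omegaU_eq, Circle.coe_toQuaternionUnits]
  refine (orderOf_injective (Quaternion.ofComplex : ℂ →* ℍ) hinj _).trans ?_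
  rw [← hexp, ← (Complex.isPrimitiveRoot_exp (2 * n) (by omega)).eq_orderOf]

theorem isDicyclicPair_omegaU_jU {n : ℕ} (hn : 0 < n) : IsDicyclicPair n (omegaU n) jU where
  orderOf_eq := orderOf_omegaU hn
  mul_self := by
    rw [jU_mul_self, omegaU_eq, ← map_pow, ← Circle.exp_natCast_mul, mul_div_cancel₀]
    exact_mod_cast hn.ne'
  conj_eq := by
    rw [omegaU_eq, jU_mul_toQuaternionUnits, mul_inv_cancel_right, map_inv]
  notMem_zpowers := fun h => jU_notMem_range
    (Subgroup.zpowers_le.mpr (MonoidHom.mem_range.mpr ⟨_, (omegaU_eq n).symm⟩) h)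

theorem Lab_eq_reflSet {n a b : ℕ} (hn : 0 < n) (ha : 0 < a) (hb : 0 < b) (han : a ∣ 2 * n)
    (hbn : b ∣ 2 * n) : Lab n a b = reflSet (omegaU n) jU a b 0 := by
  have hw : omegaU n ^ (2 * n) = 1 := orderOf_omegaU hn ▸ pow_orderOf_eq_one _
  ext x
  simp only [Lab, reflSet, Set.mem_union, Set.mem_ofPred_eq, add_zero]
  exact or_congr (exists_pow_mul_iff ha (by omega) han hw (x = ·))
    (exists_pow_mul_iff hb (by omega) hbn hw (x = · * jU))

-- `r` is a square root of `ωᵞ` on the circle; it normalises `𝒟ₙ` but need not lie in it.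
theorem exists_conj_omegaU_jU (n : ℕ) (γ : ℤ) :
    ∃ r : ℍˣ, MulAut.conj r (omegaU n) = omegaU n ∧ MulAut.conj r jU = omegaU n ^ γ * jU := by
  refine ⟨Circle.toQuaternionUnits (Circle.exp (γ * (π / n) / 2)), ?_, ?_⟩
  · rw [MulAut.conj_apply, omegaU_eq, ← map_inv, ← map_mul, ← map_mul, mul_comm _ (Circle.exp _),
      mul_inv_cancel_right]
  · rw [MulAut.conj_apply, mul_assoc, ← map_inv, jU_mul_toQuaternionUnits, inv_inv, ← mul_assoc,
      ← map_mul, ← Circle.exp_add, omegaU_eq, ← map_zpow, ← Circle.exp_intCast_mul, add_halves]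

end Quaternion

theorem statement_8 (n : ℕ) (hn : 2 ≤ n) (L : Set ℍˣ)
    (hL : IsReflectionSystem (dicyclic n) L) :
    ∃ a b : ℕ, OmegaMem n a b ∧
      ∃ (φ : dicyclic n ≃* dicyclic n) (x : ℍˣ), x ∈ L ∧
        (Lab n a b = sgImage φ ((x * ·) '' L) ∨
         Lab n a b = sgImage φ ((· * x) '' L)) := by
  have hn0 : 0 < n := by omega
  obtain ⟨a, b, β, hab, x, hx, hLx⟩ :=
    (isDicyclicPair_omegaU_jU hn0).exists_omegaMem_reflSet_eq hn0 hL
  have ⟨ha, hle, _, han, hbn, _⟩ := hab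
  obtain ⟨r, hrω, hrj⟩ := exists_conj_omegaU_jU n (-β)
  have hmap : (dicyclic n).map (MulAut.conj r).toMonoidHom = dicyclic n :=
    map_conj_closure_pair hrω hrj
  have hLab : Lab n a b = MulAut.conj r '' reflSet (omegaU n) jU a b β := by
    rw [image_conj_reflSet hrω hrj, add_neg_cancel, Lab_eq_reflSet hn0 ha (ha.trans hle)
      (han.mul_left 2) (hbn.mul_left 2)]
  have hLD : L ⊆ dicyclic n := hL.1 ▸ Subgroup.subset_closure
  refine ⟨a, b, hab, Subgroup.conjEquivOfMapEq hmap, x, hx, ?_⟩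
  rw [hLab, sgImage_conjEquivOfMapEq hmap, sgImage_conjEquivOfMapEq hmap]
  · exact hLx.imp (congrArg _) (congrArg _)
  · rintro _ ⟨y, hy, rfl⟩
    exact mul_mem (hLD hy) (hLD hx)
  · rintro _ ⟨y, hy, rfl⟩
    exact mul_mem (hLD hx) (hLD hy)
end
end
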